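/- Let G be the graph with vertex set consisting of two disjoint even holes C = c_1-...-c_k-c_1 and D = d_1-...-d_m-d_1 (k, m ≥ 4 even) together with an odd path p_1-...-p_t, where c_1 is adjacent to p_1, d_1 is adjacent to p_t, both c_2 and d_2 are adjacent to every vertex p_1, ..., p_t and to each other and to each of c_1 and d_1's counterparts as follows: c_2 is adjacent to d_1 and d_2, d_2 is adjacent to c_1 and c_2, and the edges within the holes and c_1p_1, p_ip_{i+1}, p_td_1 are as specified, with no other edges. Then G has no strong stable set. -/
import Mathlib


open SimpleGraph

section Defs

variable {V : Type*}

/-- A stable (independent) set of a graph. -/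
def IsStable (G : SimpleGraph V) (S : Set V) : Prop :=
  ∀ ⦃u v : V⦄, u ∈ S → v ∈ S → ¬ G.Adj u v

/-- `C` is a maximal clique of the induced subgraph `G[W]`. -/
def IsMaxCliqueOn (G : SimpleGraph V) (W C : Set V) : Prop :=
  C ⊆ W ∧ G.IsClique C ∧ ∀ D : Set V, D ⊆ W → G.IsClique D → C ⊆ D → D = C

/-- `C` is a maximal clique of `G`. -/
def IsMaxClique (G : SimpleGraph V) (C : Set V) : Prop :=
  G.IsClique C ∧ ∀ D : Set V, G.IsClique D → C ⊆ D → D = C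

/-- `S` is a strong stable set of the induced subgraph `G[W]`. -/
def StrongStableOn (G : SimpleGraph V) (W S : Set V) : Prop :=
  S ⊆ W ∧ IsStable G S ∧ ∀ C : Set V, IsMaxCliqueOn G W C → C.Nonempty → (S ∩ C).Nonempty

/-- `S` is a strong stable set of `G`. -/
def StrongStable (G : SimpleGraph V) (S : Set V) : Prop :=
  IsStable G S ∧ ∀ C : Set V, IsMaxClique G C → C.Nonempty → (S ∩ C).Nonempty

/-- The induced subgraph `G[W]` is strongly perfect. -/
def StronglyPerfectOn (G : SimpleGraph V) (W : Set V) : Prop :=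
  ∀ U : Set V, U ⊆ W → ∃ S : Set V, StrongStableOn G U S

/-- `G` is strongly perfect: every induced subgraph has a strong stable set. -/
def StronglyPerfect (G : SimpleGraph V) : Prop :=
  ∀ U : Set V, ∃ S : Set V, StrongStableOn G U S

/-- `G` is minimal non-strongly-perfect. -/
def MinimalNSP (G : SimpleGraph V) : Prop :=
  ¬ StronglyPerfect G ∧ ∀ W : Set V, W ≠ Set.univ → StronglyPerfectOn G W

end Defs

/-- Vertices of the first graph of Figure 5: `inl (inl i)` is `c_{i+1}` on the even
hole `C`, `inl (inr j)` is `d_{j+1}` on the even hole `D`, and `inr a` is `p_{a+1}`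
on the odd path `P`. -/
abbrev G18V (k m t : ℕ) := (ZMod k ⊕ ZMod m) ⊕ Fin t

/-- Edges: the two even holes, the path `p_1-…-p_t`, the edges `c_1p_1` and `d_1p_t`,
`c_2` complete to `{p_1, …, p_t, d_1, d_2}`, `d_2` complete to `{p_1, …, p_t, c_1, c_2}`,
and no other edges. -/
def g18Rel (k m t : ℕ) : G18V k m t → G18V k m t → Prop
  | Sum.inl (Sum.inl i), Sum.inl (Sum.inl j) => j = i + 1
  | Sum.inl (Sum.inr i), Sum.inl (Sum.inr j) => j = i + 1
  | Sum.inr a, Sum.inr b => (b : ℕ) = (a : ℕ) + 1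
  | Sum.inl (Sum.inl i), Sum.inr a => (i = 0 ∧ (a : ℕ) = 0) ∨ i = 1
  | Sum.inl (Sum.inr i), Sum.inr a => (i = 0 ∧ (a : ℕ) = t - 1) ∨ i = 1
  | Sum.inl (Sum.inl i), Sum.inl (Sum.inr j) =>
      (i = 1 ∧ (j = 0 ∨ j = 1)) ∨ (j = 1 ∧ (i = 0 ∨ i = 1))
  | _, _ => False

def g18 (k m t : ℕ) : SimpleGraph (G18V k m t) := SimpleGraph.fromRel (g18Rel k m t)

namespace G18aux

variable {k m t : ℕ}

def cc (k m t : ℕ) (i : ZMod k) : G18V k m t := Sum.inl (Sum.inl i)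
def dd (k m t : ℕ) (j : ZMod m) : G18V k m t := Sum.inl (Sum.inr j)
def pp (k m t : ℕ) (a : Fin t) : G18V k m t := Sum.inr a

lemma adj_cc {i i' : ZMod k} :
    (g18 k m t).Adj (cc k m t i) (cc k m t i') ↔ i ≠ i' ∧ (i' = i + 1 ∨ i = i' + 1) := by
  simp [g18, cc, fromRel_adj, g18Rel]

lemma adj_dd {j j' : ZMod m} :
    (g18 k m t).Adj (dd k m t j) (dd k m t j') ↔ j ≠ j' ∧ (j' = j + 1 ∨ j = j' + 1) := by
  simp [g18, dd, fromRel_adj, g18Rel]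

lemma adj_cd {i : ZMod k} {j : ZMod m} :
    (g18 k m t).Adj (cc k m t i) (dd k m t j) ↔
      ((i = 1 ∧ (j = 0 ∨ j = 1)) ∨ (j = 1 ∧ (i = 0 ∨ i = 1))) := by
  simp [g18, cc, dd, fromRel_adj, g18Rel]

lemma adj_cp {i : ZMod k} {a : Fin t} :
    (g18 k m t).Adj (cc k m t i) (pp k m t a) ↔ ((i = 0 ∧ (a : ℕ) = 0) ∨ i = 1) := by
  simp [g18, cc, pp, fromRel_adj, g18Rel]

lemma adj_dp {j : ZMod m} {a : Fin t} :
    (g18 k m t).Adj (dd k m t j) (pp k m t a) ↔ ((j = 0 ∧ (a : ℕ) = t - 1) ∨ j = 1) := by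
  simp [g18, dd, pp, fromRel_adj, g18Rel]

lemma adj_pp {a b : Fin t} :
    (g18 k m t).Adj (pp k m t a) (pp k m t b) ↔ ((b : ℕ) = a + 1 ∨ (a : ℕ) = b + 1) := by
  simp only [g18, pp, fromRel_adj, g18Rel, ne_eq, Sum.inr.injEq]
  constructor
  · rintro ⟨-, h⟩; exact h
  · rintro h
    refine ⟨fun hab => ?_, h⟩
    subst hab
    omega

lemma zmod_natCast_ne {k n : ℕ} (hk : 1 ≤ k) (h0 : 0 < n) (hn : n < k) : ((n : ZMod k)) ≠ 0 := by
  haveI : NeZero k := ⟨by omega⟩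
  rw [Ne, ZMod.natCast_eq_zero_iff]
  exact fun h => absurd (Nat.le_of_dvd h0 h) (by omega)

lemma zmod_one_ne {k : ℕ} (hk : 4 ≤ k) : (1 : ZMod k) ≠ 0 := by
  have := zmod_natCast_ne (n := 1) (by omega : 1 ≤ k) (by omega) (by omega)
  simpa using this

lemma zmod_two_ne {k : ℕ} (hk : 4 ≤ k) : (2 : ZMod k) ≠ 0 := by
  have := zmod_natCast_ne (n := 2) (by omega : 1 ≤ k) (by omega) (by omega)
  simpa using this

lemma zmod_three_ne {k : ℕ} (hk : 4 ≤ k) : (3 : ZMod k) ≠ 0 := by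
  have := zmod_natCast_ne (n := 3) (by omega : 1 ≤ k) (by omega) (by omega)
  simpa using this

lemma maxclique_cc (hk : 4 ≤ k) {i : ZMod k} (hi : i ≠ 0) :
    IsMaxClique (g18 k m t) {cc k m t i, cc k m t (i + 1)} := by
  have h1 := zmod_one_ne hk
  have h2 := zmod_two_ne hk
  have h3 := zmod_three_ne hk
  have hne : i ≠ i + 1 := fun h => h1 (by linear_combination -h)
  constructor
  · intro x hx y hy hxy
    rcases hx with rfl | rfl <;> rcases hy with rfl | rfl
    · exact absurd rfl hxy
    · exact adj_cc.mpr ⟨hne, Or.inl rfl⟩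
    · exact (adj_cc.mpr ⟨hne, Or.inl rfl⟩).symm
    · exact absurd rfl hxy
  · intro D hD hsub
    refine Set.Subset.antisymm ?_ hsub
    intro x hx
    by_contra hxn
    simp only [Set.mem_insert_iff, Set.mem_singleton_iff, not_or] at hxn
    obtain ⟨hx1, hx2⟩ := hxn
    have ha1 : (g18 k m t).Adj x (cc k m t i) :=
      hD hx (hsub (by simp)) hx1
    have ha2 : (g18 k m t).Adj x (cc k m t (i + 1)) :=
      hD hx (hsub (by simp)) hx2
    rcases x with (j | j) | a
    · -- x = cc j
      rw [show (Sum.inl (Sum.inl j) : G18V k m t) = cc k m t j from rfl] at *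
      rw [adj_cc] at ha1 ha2
      obtain ⟨hj1, e1⟩ := ha1
      obtain ⟨hj2, e2⟩ := ha2
      have hji : j ≠ i := hj1
      have hji1 : j ≠ i + 1 := hj2
      rcases e2 with e2 | e2
      · exact hji (by linear_combination -e2)
      · rcases e1 with e1 | e1
        · exact h3 (by linear_combination -e1 - e2)
        · exact hji1 e1
    · -- x = dd j
      rw [show (Sum.inl (Sum.inr j) : G18V k m t) = dd k m t j from rfl] at *
      have e1 := ((adj_cd (i := i) (j := j)).mp ha1.symm)
      have e2 := ((adj_cd (i := i + 1) (j := j)).mp ha2.symm)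
      rcases e2 with ⟨e2, -⟩ | ⟨-, e2⟩
      · exact hi (by linear_combination e2)
      · rcases e2 with e2 | e2
        · -- i + 1 = 0
          rcases e1 with ⟨e1, -⟩ | ⟨-, e1 | e1⟩
          · exact h2 (by linear_combination e2 - e1)
          · exact hi e1
          · exact h2 (by linear_combination e2 - e1)
        · -- i + 1 = 1
          exact hi (by linear_combination e2)
    · -- x = pp a
      rw [show (Sum.inr a : G18V k m t) = pp k m t a from rfl] at *
      have e1 := ((adj_cp (i := i) (a := a)).mp ha1.symm)
      have e2 := ((adj_cp (i := i + 1) (a := a)).mp ha2.symm)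
      rcases e1 with ⟨e1, -⟩ | e1
      · exact hi e1
      · rcases e2 with ⟨e2, -⟩ | e2
        · exact h2 (by linear_combination e2 - e1)
        · exact hi (by linear_combination e2)

lemma maxclique_dd (hm : 4 ≤ m) {j : ZMod m} (hj : j ≠ 0) :
    IsMaxClique (g18 k m t) {dd k m t j, dd k m t (j + 1)} := by
  have h1 := zmod_one_ne hm
  have h2 := zmod_two_ne hm
  have h3 := zmod_three_ne hm
  have hne : j ≠ j + 1 := fun h => h1 (by linear_combination -h)
  constructor
  · intro x hx y hy hxy
    rcases hx with rfl | rfl <;> rcases hy with rfl | rfl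
    · exact absurd rfl hxy
    · exact adj_dd.mpr ⟨hne, Or.inl rfl⟩
    · exact (adj_dd.mpr ⟨hne, Or.inl rfl⟩).symm
    · exact absurd rfl hxy
  · intro D hD hsub
    refine Set.Subset.antisymm ?_ hsub
    intro x hx
    by_contra hxn
    simp only [Set.mem_insert_iff, Set.mem_singleton_iff, not_or] at hxn
    obtain ⟨hx1, hx2⟩ := hxn
    have ha1 : (g18 k m t).Adj x (dd k m t j) :=
      hD hx (hsub (by simp)) hx1
    have ha2 : (g18 k m t).Adj x (dd k m t (j + 1)) :=
      hD hx (hsub (by simp)) hx2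
    rcases x with (i | i) | a
    · -- x = cc i
      rw [show (Sum.inl (Sum.inl i) : G18V k m t) = cc k m t i from rfl] at *
      have e1 := ((adj_cd (i := i) (j := j)).mp ha1)
      have e2 := ((adj_cd (i := i) (j := j + 1)).mp ha2)
      rcases e2 with ⟨-, e2j | e2j⟩ | ⟨e2j, -⟩
      · -- j + 1 = 0
        rcases e1 with ⟨-, e1j | e1j⟩ | ⟨e1j, -⟩
        · exact hj e1j
        · exact h2 (by linear_combination e2j - e1j)
        · exact h2 (by linear_combination e2j - e1j)
      · exact hj (by linear_combination e2j)
      · exact hj (by linear_combination e2j)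
    · -- x = dd i
      rw [show (Sum.inl (Sum.inr i) : G18V k m t) = dd k m t i from rfl] at *
      rw [adj_dd] at ha1 ha2
      obtain ⟨hj1, e1⟩ := ha1
      obtain ⟨hj2, e2⟩ := ha2
      rcases e2 with e2 | e2
      · exact hj1 (by linear_combination -e2)
      · rcases e1 with e1 | e1
        · exact h3 (by linear_combination -e1 - e2)
        · exact hj2 e1
    · -- x = pp a
      rw [show (Sum.inr a : G18V k m t) = pp k m t a from rfl] at *
      have e1 := ((adj_dp (j := j) (a := a)).mp ha1.symm)
      have e2 := ((adj_dp (j := j + 1) (a := a)).mp ha2.symm)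
      rcases e1 with ⟨e1, -⟩ | e1
      · exact hj e1
      · rcases e2 with ⟨e2, -⟩ | e2
        · exact h2 (by linear_combination e2 - e1)
        · exact hj (by linear_combination e2)

lemma maxclique_pp (hk : 4 ≤ k) (hm : 4 ≤ m) {n : ℕ} (hn : n + 1 < t) :
    IsMaxClique (g18 k m t)
      {pp k m t ⟨n, by omega⟩, pp k m t ⟨n + 1, hn⟩, cc k m t 1, dd k m t 1} := by
  have h1k := zmod_one_ne hk
  have h1m := zmod_one_ne hm
  constructor
  · intro x hx y hy hxy
    simp only [Set.mem_insert_iff, Set.mem_singleton_iff] at hx hy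
    have hadj : ∀ u v : G18V k m t,
        (u = pp k m t ⟨n, by omega⟩ ∨ u = pp k m t ⟨n+1, hn⟩ ∨ u = cc k m t 1 ∨ u = dd k m t 1) →
        (v = pp k m t ⟨n, by omega⟩ ∨ v = pp k m t ⟨n+1, hn⟩ ∨ v = cc k m t 1 ∨ v = dd k m t 1) →
        u ≠ v → (g18 k m t).Adj u v := by
      rintro u v (rfl | rfl | rfl | rfl) (rfl | rfl | rfl | rfl) huv
      · exact absurd rfl huv
      · exact adj_pp.mpr (Or.inl rfl)
      · exact ((adj_cp (i := 1)).mpr (Or.inr rfl)).symm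
      · exact ((adj_dp (j := 1)).mpr (Or.inr rfl)).symm
      · exact adj_pp.mpr (Or.inr rfl)
      · exact absurd rfl huv
      · exact ((adj_cp (i := 1)).mpr (Or.inr rfl)).symm
      · exact ((adj_dp (j := 1)).mpr (Or.inr rfl)).symm
      · exact (adj_cp (i := 1)).mpr (Or.inr rfl)
      · exact (adj_cp (i := 1)).mpr (Or.inr rfl)
      · exact absurd rfl huv
      · exact adj_cd.mpr (Or.inl ⟨rfl, Or.inr rfl⟩)
      · exact (adj_dp (j := 1)).mpr (Or.inr rfl)
      · exact (adj_dp (j := 1)).mpr (Or.inr rfl)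
      · exact (adj_cd.mpr (Or.inl ⟨rfl, Or.inr rfl⟩)).symm
      · exact absurd rfl huv
    exact hadj x y hx hy hxy
  · intro D hD hsub
    refine Set.Subset.antisymm ?_ hsub
    intro x hx
    by_contra hxn
    simp only [Set.mem_insert_iff, Set.mem_singleton_iff, not_or] at hxn
    obtain ⟨hx1, hx2, hx3, hx4⟩ := hxn
    have ha1 : (g18 k m t).Adj x (pp k m t ⟨n, by omega⟩) := hD hx (hsub (by simp)) hx1
    have ha2 : (g18 k m t).Adj x (pp k m t ⟨n + 1, hn⟩) := hD hx (hsub (by simp)) hx2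
    have ha3 : (g18 k m t).Adj x (cc k m t 1) := hD hx (hsub (by simp)) hx3
    have ha4 : (g18 k m t).Adj x (dd k m t 1) := hD hx (hsub (by simp)) hx4
    rcases x with (i | j) | e
    · -- x = cc i
      rw [show (Sum.inl (Sum.inl i) : G18V k m t) = cc k m t i from rfl] at *
      have hi1 : i ≠ 1 := fun h => hx3 (by rw [h])
      have e4 := adj_cd.mp ha4
      have hi0 : i = 0 := by
        rcases e4 with ⟨e, -⟩ | ⟨-, e | e⟩
        · exact absurd e hi1
        · exact e
        · exact absurd e hi1
      have e1 := adj_cp.mp ha1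
      have e2 := adj_cp.mp ha2
      rcases e1 with ⟨-, e1⟩ | e1
      · rcases e2 with ⟨-, e2⟩ | e2
        · simp only at e1 e2; omega
        · exact hi1 (by rw [hi0] at e2 ⊢; exact absurd e2.symm (zmod_one_ne hk))
      · exact hi1 e1
    · -- x = dd j
      rw [show (Sum.inl (Sum.inr j) : G18V k m t) = dd k m t j from rfl] at *
      have hj1 : j ≠ 1 := fun h => hx4 (by rw [h])
      have e1 := adj_dp.mp ha1
      have e2 := adj_dp.mp ha2
      rcases e1 with ⟨-, e1⟩ | e1
      · rcases e2 with ⟨-, e2⟩ | e2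
        · simp only at e1 e2; omega
        · exact hj1 e2
      · exact hj1 e1
    · -- x = pp e
      rw [show (Sum.inr e : G18V k m t) = pp k m t e from rfl] at *
      have he1 : (e : ℕ) ≠ n := fun h => hx1 (by cases e; simp_all [pp])
      have he2 : (e : ℕ) ≠ n + 1 := fun h => hx2 (by cases e; simp_all [pp])
      have e1 := adj_pp.mp ha1
      have e2 := adj_pp.mp ha2
      simp only at e1 e2
      omega

lemma hole_c (hk : 4 ≤ k) (hke : Even k) {S : Set (G18V k m t)}
    (hst : IsStable (g18 k m t) S)
    (hmeet : ∀ C : Set (G18V k m t), IsMaxClique (g18 k m t) C → C.Nonempty →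
      (S ∩ C).Nonempty)
    (h1 : cc k m t 1 ∉ S) : cc k m t 0 ∈ S := by
  have key : ∀ n : ℕ, 1 ≤ n → n ≤ k - 1 → (cc k m t (n : ZMod k) ∈ S ↔ Even n) := by
    intro n hn
    induction n, hn using Nat.le_induction with
    | base =>
      intro _
      simp only [Nat.cast_one]
      constructor
      · intro h; exact absurd h h1
      · intro h; exact absurd h (by decide)
    | succ n hn ih =>
      intro hle
      have ihn := ih (by omega)
      have hcast : ((n + 1 : ℕ) : ZMod k) = (n : ZMod k) + 1 := by push_cast; ring
      by_cases he : Even n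
      · have hin : cc k m t (n : ZMod k) ∈ S := ihn.mpr he
        have hadj : (g18 k m t).Adj (cc k m t (n : ZMod k)) (cc k m t ((n + 1 : ℕ) : ZMod k)) := by
          rw [hcast]
          exact adj_cc.mpr ⟨fun h => zmod_one_ne hk (by linear_combination -h), Or.inl rfl⟩
        have hout : cc k m t ((n + 1 : ℕ) : ZMod k) ∉ S := fun h => hst hin h hadj
        rw [hcast] at hout
        simp [Nat.even_add_one, he, hout]
      · have hout : cc k m t (n : ZMod k) ∉ S := fun h => he (ihn.mp h)
        have hmax := maxclique_cc (m := m) (t := t) hk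
          (i := (n : ZMod k)) (zmod_natCast_ne (by omega) (by omega) (by omega))
        obtain ⟨y, hyS, hyC⟩ := hmeet _ hmax ⟨_, Set.mem_insert _ _⟩
        simp only [Set.mem_insert_iff, Set.mem_singleton_iff] at hyC
        rcases hyC with rfl | rfl
        · exact absurd hyS hout
        · rw [hcast]
          simp [Nat.even_add_one, he, hyS]
  have hkmod : k % 2 = 0 := Nat.even_iff.mp hke
  have hk1 : ¬ Even (k - 1) := by rw [Nat.even_iff]; omega
  have hlast : cc k m t ((k - 1 : ℕ) : ZMod k) ∉ S :=
    fun h => hk1 ((key (k - 1) (by omega) le_rfl).mp h)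
  have hmax := maxclique_cc (m := m) (t := t) hk
    (i := ((k - 1 : ℕ) : ZMod k)) (zmod_natCast_ne (by omega) (by omega) (by omega))
  obtain ⟨y, hyS, hyC⟩ := hmeet _ hmax ⟨_, Set.mem_insert _ _⟩
  simp only [Set.mem_insert_iff, Set.mem_singleton_iff] at hyC
  rcases hyC with rfl | rfl
  · exact absurd hyS hlast
  · have hz : ((k - 1 : ℕ) : ZMod k) + 1 = 0 := by
      rw [show ((k - 1 : ℕ) : ZMod k) + 1 = (((k - 1) + 1 : ℕ) : ZMod k) by push_cast; ring,
        show (k - 1) + 1 = k by omega, ZMod.natCast_self]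
    rwa [hz] at hyS

lemma hole_d (hm : 4 ≤ m) (hme : Even m) {S : Set (G18V k m t)}
    (hst : IsStable (g18 k m t) S)
    (hmeet : ∀ C : Set (G18V k m t), IsMaxClique (g18 k m t) C → C.Nonempty →
      (S ∩ C).Nonempty)
    (h1 : dd k m t 1 ∉ S) : dd k m t 0 ∈ S := by
  have key : ∀ n : ℕ, 1 ≤ n → n ≤ m - 1 → (dd k m t (n : ZMod m) ∈ S ↔ Even n) := by
    intro n hn
    induction n, hn using Nat.le_induction with
    | base =>
      intro _
      simp only [Nat.cast_one]
      constructor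
      · intro h; exact absurd h h1
      · intro h; exact absurd h (by decide)
    | succ n hn ih =>
      intro hle
      have ihn := ih (by omega)
      have hcast : ((n + 1 : ℕ) : ZMod m) = (n : ZMod m) + 1 := by push_cast; ring
      by_cases he : Even n
      · have hin : dd k m t (n : ZMod m) ∈ S := ihn.mpr he
        have hadj : (g18 k m t).Adj (dd k m t (n : ZMod m)) (dd k m t ((n + 1 : ℕ) : ZMod m)) := by
          rw [hcast]
          exact adj_dd.mpr ⟨fun h => zmod_one_ne hm (by linear_combination -h), Or.inl rfl⟩
        have hout : dd k m t ((n + 1 : ℕ) : ZMod m) ∉ S := fun h => hst hin h hadj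
        rw [hcast] at hout
        simp [Nat.even_add_one, he, hout]
      · have hout : dd k m t (n : ZMod m) ∉ S := fun h => he (ihn.mp h)
        have hmax := maxclique_dd (k := k) (t := t) hm
          (j := (n : ZMod m)) (zmod_natCast_ne (by omega) (by omega) (by omega))
        obtain ⟨y, hyS, hyC⟩ := hmeet _ hmax ⟨_, Set.mem_insert _ _⟩
        simp only [Set.mem_insert_iff, Set.mem_singleton_iff] at hyC
        rcases hyC with rfl | rfl
        · exact absurd hyS hout
        · rw [hcast]
          simp [Nat.even_add_one, he, hyS]
  have hmmod : m % 2 = 0 := Nat.even_iff.mp hme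
  have hm1 : ¬ Even (m - 1) := by rw [Nat.even_iff]; omega
  have hlast : dd k m t ((m - 1 : ℕ) : ZMod m) ∉ S :=
    fun h => hm1 ((key (m - 1) (by omega) le_rfl).mp h)
  have hmax := maxclique_dd (k := k) (t := t) hm
    (j := ((m - 1 : ℕ) : ZMod m)) (zmod_natCast_ne (by omega) (by omega) (by omega))
  obtain ⟨y, hyS, hyC⟩ := hmeet _ hmax ⟨_, Set.mem_insert _ _⟩
  simp only [Set.mem_insert_iff, Set.mem_singleton_iff] at hyC
  rcases hyC with rfl | rfl
  · exact absurd hyS hlast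
  · have hz : ((m - 1 : ℕ) : ZMod m) + 1 = 0 := by
      rw [show ((m - 1 : ℕ) : ZMod m) + 1 = (((m - 1) + 1 : ℕ) : ZMod m) by push_cast; ring,
        show (m - 1) + 1 = m by omega, ZMod.natCast_self]
    rwa [hz] at hyS

end G18aux

open G18aux

theorem g18_no_sss (k m t : ℕ)
    (hk : 4 ≤ k) (hke : Even k) (hm : 4 ≤ m) (hme : Even m)
    (ht : 2 ≤ t) (hte : Even t) :
    ¬ ∃ S : Set (G18V k m t), StrongStable (g18 k m t) S := by
  rintro ⟨S, hst, hmeet⟩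
  have hc0 : cc k m t 0 ∈ S := by
    by_cases hc1 : cc k m t 1 ∈ S
    · exfalso
      have hd1 : dd k m t 1 ∉ S := fun h => hst hc1 h (adj_cd.mpr (Or.inl ⟨rfl, Or.inr rfl⟩))
      have hd0 : dd k m t 0 ∉ S := fun h => hst hc1 h (adj_cd.mpr (Or.inl ⟨rfl, Or.inl rfl⟩))
      exact hd0 (hole_d hm hme hst hmeet hd1)
    · exact hole_c hk hke hst hmeet hc1
  have hc1 : cc k m t 1 ∉ S := fun h =>
    hst hc0 h (adj_cc.mpr ⟨fun hh => zmod_one_ne hk hh.symm, Or.inl (zero_add 1).symm⟩)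
  have hd1 : dd k m t 1 ∉ S := fun h => hst hc0 h (adj_cd.mpr (Or.inr ⟨rfl, Or.inl rfl⟩))
  have hd0 : dd k m t 0 ∈ S := hole_d hm hme hst hmeet hd1
  have hp0 : pp k m t ⟨0, by omega⟩ ∉ S := fun h => hst hc0 h (adj_cp.mpr (Or.inl ⟨rfl, rfl⟩))
  have key : ∀ n, ∀ h : n < t, (pp k m t ⟨n, h⟩ ∈ S ↔ Odd n) := by
    intro n
    induction n with
    | zero =>
      intro h
      exact iff_of_false hp0 (by decide)
    | succ n ih =>
      intro h
      have hn := ih (by omega)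
      by_cases ho : Odd n
      · have hin := hn.mpr ho
        have hadj : (g18 k m t).Adj (pp k m t ⟨n, by omega⟩) (pp k m t ⟨n + 1, h⟩) :=
          adj_pp.mpr (Or.inl rfl)
        exact iff_of_false (fun hh => hst hin hh hadj)
          (by rw [Nat.odd_iff] at ho ⊢; omega)
      · have hout : pp k m t ⟨n, by omega⟩ ∉ S := fun hh => ho (hn.mp hh)
        have hmax := maxclique_pp (k := k) (m := m) hk hm (n := n) h
        obtain ⟨y, hyS, hyC⟩ := hmeet _ hmax ⟨_, Set.mem_insert _ _⟩
        simp only [Set.mem_insert_iff, Set.mem_singleton_iff] at hyC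
        rcases hyC with rfl | rfl | rfl | rfl
        · exact absurd hyS hout
        · exact iff_of_true hyS (by rw [Nat.odd_iff] at ho ⊢; omega)
        · exact absurd hyS hc1
        · exact absurd hyS hd1
  have hodd : Odd (t - 1) := by
    have := Nat.even_iff.mp hte
    rw [Nat.odd_iff]; omega
  have hpt : pp k m t ⟨t - 1, by omega⟩ ∈ S := (key (t - 1) (by omega)).mpr hodd
  exact hst hd0 hpt (adj_dp.mpr (Or.inl ⟨rfl, rfl⟩))
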